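/- Let p be a prime, m a positive natural number, and j a positive integer with gcd(j, p) = 1. Let A be the m×m Jordan block over ZMod p with eigenvalue 1, i.e., A = 1 + J where J is the matrix with entries J i j = 1 when j = i+1 and 0 otherwise. Then A^j is conjugate to A in GL_m(ZMod p); that is, there exists an invertible m×m matrix P over ZMod p with A^j = P⁻¹ · A · P. -/
import Mathlib


/-- The nilpotent upper-triangular Jordan block: entry `(i,j)` is `1` if `j = i + 1`
and `0` otherwise. -/
def jordanNilp (p m : ℕ) : Matrix (Fin m) (Fin m) (ZMod p) :=
  Matrix.of fun i j => if (j : ℕ) = (i : ℕ) + 1 then 1 else 0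

lemma jordanNilp_pow (p m s : ℕ) (i : Fin m) : ∀ k : Fin m,
    ((jordanNilp p m) ^ s) i k = if (k : ℕ) = (i : ℕ) + s then 1 else 0 := by
  induction s with
  | zero =>
    intro k
    simp [Matrix.one_apply, Fin.ext_iff, eq_comm]
  | succ s ih =>
    intro k
    rw [pow_succ, Matrix.mul_apply]
    by_cases h : (i : ℕ) + s < m
    · rw [Finset.sum_eq_single (⟨(i : ℕ) + s, h⟩ : Fin m)]
      · rw [ih]
        simp only [jordanNilp, Matrix.of_apply]
        simp [← add_assoc]
      · intro l _ hl
        rw [ih, if_neg, zero_mul]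
        simpa [Fin.ext_iff] using hl
      · simp
    · rw [Finset.sum_eq_zero, if_neg (by omega)]
      intro l _
      rw [ih, if_neg (by omega), zero_mul]

lemma jordanNilp_pow_m (p m : ℕ) : (jordanNilp p m) ^ m = 0 := by
  ext i k
  rw [jordanNilp_pow, if_neg (by omega), Matrix.zero_apply]

theorem jordan_block_pow_conjugate (p m j : ℕ) [Fact p.Prime]
    (hm : 0 < m) (hj : 0 < j) (hjp : Nat.gcd j p = 1)
    (A : Matrix (Fin m) (Fin m) (ZMod p)) (hA : A = 1 + jordanNilp p m) :
    ∃ P : GL (Fin m) (ZMod p),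
      A ^ j = (↑(P⁻¹) : Matrix (Fin m) (Fin m) (ZMod p)) * A
                * (↑P : Matrix (Fin m) (Fin m) (ZMod p)) := by
  classical
  set J : Matrix (Fin m) (Fin m) (ZMod p) := jordanNilp p m with hJdef
  have hju : IsUnit ((j : ZMod p)) := (ZMod.isUnit_iff_coprime j p).mpr hjp
  set n : Polynomial (ZMod p) := (1 + Polynomial.X) ^ j - 1 with hndef
  -- basic divisibility facts in the polynomial ring
  have hXn : Polynomial.X ∣ n := by
    rw [Polynomial.X_dvd_iff, hndef, Polynomial.coeff_sub,
      Polynomial.coeff_one_add_X_pow]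
    simp
  have hX2 : Polynomial.X ^ 2 ∣ n - Polynomial.C (j : ZMod p) * Polynomial.X := by
    rw [Polynomial.X_pow_dvd_iff]
    intro d hd
    interval_cases d <;>
      simp [hndef, Polynomial.coeff_one_add_X_pow, Polynomial.coeff_one,
        Polynomial.coeff_X_zero, Polynomial.coeff_X_one, Nat.choose_one_right]
  have hdvd : ∀ s : ℕ, Polynomial.X ^ (s + 1) ∣
      n ^ s - Polynomial.C ((j : ZMod p) ^ s) * Polynomial.X ^ s := by
    intro s
    induction s with
    | zero => simp
    | succ s ih =>
      have h1 : Polynomial.X ^ (s + 2) ∣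
          n ^ s * (n - Polynomial.C (j : ZMod p) * Polynomial.X) := by
        obtain ⟨g, hg⟩ := hXn
        obtain ⟨c, hc⟩ := hX2
        exact ⟨g ^ s * c, by rw [hc, hg]; ring⟩
      have h2 : Polynomial.X ^ (s + 2) ∣ (Polynomial.C (j : ZMod p) * Polynomial.X) *
          (n ^ s - Polynomial.C ((j : ZMod p) ^ s) * Polynomial.X ^ s) := by
        obtain ⟨d, hd⟩ := ih
        exact ⟨Polynomial.C (j : ZMod p) * d, by rw [hd]; ring⟩
      have h3 := dvd_add h1 h2
      have heq : n ^ s * (n - Polynomial.C (j : ZMod p) * Polynomial.X) +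
          (Polynomial.C (j : ZMod p) * Polynomial.X) *
            (n ^ s - Polynomial.C ((j : ZMod p) ^ s) * Polynomial.X ^ s)
          = n ^ (s + 1) - Polynomial.C ((j : ZMod p) ^ (s + 1)) * Polynomial.X ^ (s + 1) := by
        rw [pow_succ ((j : ZMod p)) s, map_mul]
        ring
      rwa [heq] at h3
  -- transfer to matrices
  have hfX : Polynomial.aeval (R := ZMod p) J Polynomial.X = J := Polynomial.aeval_X J
  set N : Matrix (Fin m) (Fin m) (ZMod p) := A ^ j - 1 with hNdef
  have hfn : Polynomial.aeval (R := ZMod p) J n = N := by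
    rw [hndef, map_sub, map_pow, map_add, map_one, hfX, hNdef, hA]
  have key : ∀ s : ℕ, ∃ D : Matrix (Fin m) (Fin m) (ZMod p),
      N ^ s = ((j : ZMod p) ^ s) • J ^ s + J ^ (s + 1) * D := by
    intro s
    obtain ⟨d, hd⟩ := hdvd s
    refine ⟨Polynomial.aeval (R := ZMod p) J d, ?_⟩
    have heq : n ^ s = Polynomial.C ((j : ZMod p) ^ s) * Polynomial.X ^ s +
        Polynomial.X ^ (s + 1) * d := by
      rw [← hd]; ring
    have h := congrArg (Polynomial.aeval (R := ZMod p) J) heq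
    simp only [map_add, map_mul, map_pow, Polynomial.aeval_X, Polynomial.aeval_C, hfn] at h
    rw [h, Algebra.smul_def, map_pow]
  have hNm : N ^ m = 0 := by
    obtain ⟨g, hg⟩ := hXn
    have heq : n ^ m = Polynomial.X ^ m * g ^ m := by rw [hg]; ring
    have h := congrArg (Polynomial.aeval (R := ZMod p) J) heq
    simp only [map_mul, map_pow, Polynomial.aeval_X, hfn] at h
    rw [h, hJdef, jordanNilp_pow_m, zero_mul]
  -- the last column index
  obtain ⟨last, hlv⟩ : ∃ l : Fin m, (l : ℕ) = m - 1 := ⟨⟨m - 1, by omega⟩, rfl⟩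
  -- entries of J^t * D in the last column vanish when the shift exceeds the size
  have hshift : ∀ (t : ℕ) (D : Matrix (Fin m) (Fin m) (ZMod p)) (i : Fin m),
      m ≤ (i : ℕ) + t → (J ^ t * D) i last = 0 := by
    intro t D i hit
    rw [Matrix.mul_apply]
    apply Finset.sum_eq_zero
    intro l _
    rw [hJdef, jordanNilp_pow, if_neg (by omega), zero_mul]
  -- the conjugating matrix
  set P : Matrix (Fin m) (Fin m) (ZMod p) :=
    Matrix.of (fun i k : Fin m => (N ^ (m - 1 - (k : ℕ))) i last) with hPdef
  have hP_lt : ∀ i k : Fin m, (k : ℕ) < (i : ℕ) → P i k = 0 := by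
    intro i k hki
    obtain ⟨D, hD⟩ := key (m - 1 - (k : ℕ))
    show (N ^ (m - 1 - (k : ℕ))) i last = 0
    rw [hD, Matrix.add_apply, Matrix.smul_apply, hJdef, jordanNilp_pow,
      if_neg (by omega), hshift _ D i (by omega), smul_zero, add_zero]
  have hP_diag : ∀ k : Fin m, P k k = (j : ZMod p) ^ (m - 1 - (k : ℕ)) := by
    intro k
    obtain ⟨D, hD⟩ := key (m - 1 - (k : ℕ))
    show (N ^ (m - 1 - (k : ℕ))) k last = _
    rw [hD, Matrix.add_apply, Matrix.smul_apply, hJdef, jordanNilp_pow,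
      if_pos (by omega), hshift _ D k (by omega), smul_eq_mul, mul_one, add_zero]
  have hPdet : IsUnit P.det := by
    have htri : P.BlockTriangular id := fun i k h => hP_lt i k h
    rw [Matrix.det_of_upperTriangular htri]
    have hprod : ∏ i : Fin m, P i i = (j : ZMod p) ^ (∑ i : Fin m, (m - 1 - (i : ℕ))) := by
      rw [← Finset.prod_pow_eq_pow_sum]
      exact Finset.prod_congr rfl fun i _ => hP_diag i
    rw [hprod]
    exact hju.pow _
  have hPu : IsUnit P := (Matrix.isUnit_iff_isUnit_det P).mpr hPdet
  -- the key intertwining identity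
  have hNP : N * P = P * J := by
    ext i k
    have hL : (N * P) i k = (N ^ (m - 1 - (k : ℕ) + 1)) i last := by
      rw [pow_succ', Matrix.mul_apply, Matrix.mul_apply]
      rfl
    rw [hL, Matrix.mul_apply]
    by_cases hk : (k : ℕ) = 0
    · have hmk : m - 1 - (k : ℕ) + 1 = m := by omega
      rw [hmk, hNm, Matrix.zero_apply]
      symm
      apply Finset.sum_eq_zero
      intro l _
      rw [hJdef]
      show P i l * (if (k : ℕ) = (l : ℕ) + 1 then 1 else 0) = 0
      rw [if_neg (by omega), mul_zero]
    · have hk1 : (k : ℕ) - 1 < m := by omega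
      rw [Finset.sum_eq_single (⟨(k : ℕ) - 1, hk1⟩ : Fin m)]
      · rw [hJdef]
        show _ = P i _ * (if (k : ℕ) = ((k : ℕ) - 1) + 1 then 1 else 0)
        rw [if_pos (by omega), mul_one]
        show (N ^ (m - 1 - (k : ℕ) + 1)) i last = (N ^ (m - 1 - ((k : ℕ) - 1))) i last
        have harg : m - 1 - (k : ℕ) + 1 = m - 1 - ((k : ℕ) - 1) := by
          have := k.isLt; omega
        rw [harg]
      · intro l _ hl
        rw [hJdef]
        show P i l * (if (k : ℕ) = (l : ℕ) + 1 then 1 else 0) = 0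
        rw [if_neg, mul_zero]
        intro hlk
        exact hl (Fin.ext (show (l : ℕ) = (k : ℕ) - 1 by omega))
      · simp
  have hBP : A ^ j * P = P * A := by
    have h1 : A ^ j = 1 + N := by rw [hNdef]; noncomm_ring
    rw [h1, hA, add_mul, mul_add, one_mul, mul_one, hNP, hJdef]
  -- assemble the final answer
  refine ⟨(hPu.unit)⁻¹, ?_⟩
  rw [inv_inv]
  have hcoe : (↑hPu.unit : Matrix (Fin m) (Fin m) (ZMod p)) = P := hPu.unit_spec
  have hinv : P * (↑(hPu.unit⁻¹) : Matrix (Fin m) (Fin m) (ZMod p)) = 1 := by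
    simpa only [hcoe] using hPu.unit.mul_inv
  calc A ^ j = A ^ j * (P * (↑(hPu.unit⁻¹) : Matrix (Fin m) (Fin m) (ZMod p))) := by
        rw [hinv, mul_one]
    _ = (A ^ j * P) * (↑(hPu.unit⁻¹) : Matrix (Fin m) (Fin m) (ZMod p)) := by rw [mul_assoc]
    _ = (P * A) * (↑(hPu.unit⁻¹) : Matrix (Fin m) (Fin m) (ZMod p)) := by rw [hBP]
    _ = (↑hPu.unit : Matrix (Fin m) (Fin m) (ZMod p)) * A *
          (↑(hPu.unit⁻¹) : Matrix (Fin m) (Fin m) (ZMod p)) := by rw [hcoe]
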